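/- For any v ∈ ℝ^d with ‖v‖ = 1 and any coordinate k ∈ {1,…,d}, E[(vᵀY)³·Y_k − v_k·(vᵀY)⁴] = (ψ − 3)·v_k·(v_k² − Σ_{i=1}^d vᵢ⁴). -/

import Mathlib

/-!
Split `vᵀY = v_k Y_k + T`, where `T = Σ_{i ≠ k} vᵢ Yᵢ` is independent of `Y_k`. Expanding binomially
and factoring each mixed moment by independence, every term carrying a single factor `Y_k` or `T`
vanishes (both are centred), so `E[(vᵀY)³ Y_k] = v_k³ ψ + 3 v_k E[T²]` with `E[T²] = 1 - v_k²`.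
Splitting off one coordinate at a time in the same way gives
`E[(vᵀY)⁴] = ψ Σ vᵢ⁴ + 3 ((Σ vᵢ²)² - Σ vᵢ⁴) = ψ Σ vᵢ⁴ + 3 (1 - Σ vᵢ⁴)`.
-/

open MeasureTheory ProbabilityTheory Finset
open scoped ENNReal

theorem pow_mul_add_pow_eq_sum {R : Type*} [CommSemiring R] (x t a : R) (r n : ℕ) :
    x ^ r * (a * x + t) ^ n =
      ∑ j ∈ range (n + 1), a ^ j * n.choose j * (x ^ (r + j) * t ^ (n - j)) := by
  rw [add_pow, mul_sum]
  refine sum_congr rfl fun j _ => ?_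
  ring

section TwoVariables

variable {Ω : Type*} [MeasurableSpace Ω] {μ : Measure Ω} {X T : Ω → ℝ}

theorem MeasureTheory.MemLp.integrable_pow_of_le [IsFiniteMeasure μ] {p : ℝ≥0∞} {m : ℕ}
    (hX : MemLp X p μ) (hm : m ≤ p) : Integrable (fun ω => X ω ^ m) μ := by
  have hXm : MemLp X m μ := hX.mono_exponent hm
  refine (integrable_norm_iff (f := fun ω => X ω ^ m) (hX.1.pow m)).1 ?_
  simpa only [norm_pow] using hXm.integrable_norm_pow'

theorem ProbabilityTheory.IndepFun.integrable_pow_mul_pow [IsFiniteMeasure μ] {p q : ℝ≥0∞}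
    {j m : ℕ} (hXT : IndepFun X T μ) (hX : MemLp X p μ) (hT : MemLp T q μ) (hj : j ≤ p)
    (hm : m ≤ q) : Integrable (fun ω => X ω ^ j * T ω ^ m) μ :=
  (hXT.comp (measurable_id.pow_const j) (measurable_id.pow_const m)).integrable_mul
    (hX.integrable_pow_of_le hj) (hT.integrable_pow_of_le hm)

theorem ProbabilityTheory.IndepFun.integral_pow_mul_pow (hXT : IndepFun X T μ)
    (hX : AEStronglyMeasurable X μ) (hT : AEStronglyMeasurable T μ) (j m : ℕ) :
    ∫ ω, X ω ^ j * T ω ^ m ∂μ = (∫ ω, X ω ^ j ∂μ) * ∫ ω, T ω ^ m ∂μ :=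
  (hXT.comp (measurable_id.pow_const j) (measurable_id.pow_const m)
    ).integral_fun_mul_eq_mul_integral (hX.pow j) (hT.pow m)

variable [IsFiniteMeasure μ] {p : ℝ≥0∞} {r n : ℕ}

theorem ProbabilityTheory.IndepFun.integrable_pow_mul_add_pow (hXT : IndepFun X T μ)
    (hX : MemLp X p μ) (hT : MemLp T p μ) (hrn : (r + n : ℕ) ≤ p) (a : ℝ) :
    Integrable (fun ω => X ω ^ r * (a * X ω + T ω) ^ n) μ := by
  simp_rw [pow_mul_add_pow_eq_sum]
  refine integrable_finsetSum _ fun j hj => ?_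
  have hj : j ≤ n := Nat.lt_succ_iff.1 (mem_range.1 hj)
  exact (hXT.integrable_pow_mul_pow hX hT ((Nat.cast_le.2 (by omega)).trans hrn)
    ((Nat.cast_le.2 (by omega)).trans hrn)).const_mul _

theorem ProbabilityTheory.IndepFun.integral_pow_mul_add_pow (hXT : IndepFun X T μ)
    (hX : MemLp X p μ) (hT : MemLp T p μ) (hrn : (r + n : ℕ) ≤ p) (a : ℝ) :
    ∫ ω, X ω ^ r * (a * X ω + T ω) ^ n ∂μ =
      ∑ j ∈ range (n + 1), a ^ j * n.choose j *
        ((∫ ω, X ω ^ (r + j) ∂μ) * ∫ ω, T ω ^ (n - j) ∂μ) := by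
  simp_rw [pow_mul_add_pow_eq_sum]
  rw [integral_finsetSum]
  · simp only [integral_const_mul, hXT.integral_pow_mul_pow hX.1 hT.1]
  · intro j hj
    have hj : j ≤ n := Nat.lt_succ_iff.1 (mem_range.1 hj)
    exact (hXT.integrable_pow_mul_pow hX hT ((Nat.cast_le.2 (by omega)).trans hrn)
      ((Nat.cast_le.2 (by omega)).trans hrn)).const_mul _

end TwoVariables

section WeightedSums

variable {Ω ι : Type*} [MeasurableSpace Ω] {μ : Measure Ω} {Y : ι → Ω → ℝ}

theorem ProbabilityTheory.iIndepFun.indepFun_sum_mul_of_notMem (hindep : iIndepFun Y μ)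
    (hY : ∀ i, AEMeasurable (Y i) μ) (w : ι → ℝ) {s : Finset ι} {a : ι} (ha : a ∉ s) :
    IndepFun (Y a) (fun ω => ∑ i ∈ s, w i * Y i ω) μ := by
  have h := hindep.indepFun_finset₀ {a} s (disjoint_singleton_left.2 ha) hY
  have hsum : Measurable fun x : s → ℝ => ∑ i : s, w i * x i := by fun_prop
  convert h.comp (measurable_pi_apply ⟨a, mem_singleton_self a⟩) hsum using 1
  · rfl
  · funext ω
    exact (sum_coe_sort s fun i => w i * Y i ω).symm

theorem MeasureTheory.memLp_finsetSum_mul {p : ℝ≥0∞} (hY : ∀ i, MemLp (Y i) p μ) (w : ι → ℝ)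
    (s : Finset ι) : MemLp (fun ω => ∑ i ∈ s, w i * Y i ω) p μ :=
  memLp_finsetSum s fun i _ => (hY i).const_mul (w i)

theorem MeasureTheory.integral_finsetSum_mul_eq_zero (hY : ∀ i, Integrable (Y i) μ)
    (hmean : ∀ i, ∫ ω, Y i ω ∂μ = 0) (w : ι → ℝ) (s : Finset ι) :
    ∫ ω, ∑ i ∈ s, w i * Y i ω ∂μ = 0 := by
  rw [integral_finsetSum s fun i _ => (hY i).const_mul (w i)]
  simp [integral_const_mul, hmean]

variable [IsProbabilityMeasure μ]

theorem ProbabilityTheory.iIndepFun.integral_finsetSum_mul_sq (hindep : iIndepFun Y μ)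
    (hY : ∀ i, MemLp (Y i) 2 μ) (hmean : ∀ i, ∫ ω, Y i ω ∂μ = 0)
    (hvar : ∀ i, ∫ ω, Y i ω ^ 2 ∂μ = 1) (w : ι → ℝ) (s : Finset ι) :
    ∫ ω, (∑ i ∈ s, w i * Y i ω) ^ 2 ∂μ = ∑ i ∈ s, w i ^ 2 := by
  classical
  induction s using Finset.induction_on with
  | empty => simp
  | insert a s ha ih =>
    have hsplit := (hindep.indepFun_sum_mul_of_notMem (fun i => (hY i).1.aemeasurable) w ha
      ).integral_pow_mul_add_pow (r := 0) (n := 2) (hY a) (memLp_finsetSum_mul hY w s)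
        (by norm_num) (w a)
    have hmean_s :=
      integral_finsetSum_mul_eq_zero (fun i => (hY i).integrable one_le_two) hmean w s
    simp only [pow_zero, one_mul] at hsplit
    simp only [sum_insert ha, hsplit, Nat.reduceAdd, zero_add, sum_range_succ, range_one,
      sum_singleton, pow_zero, Nat.choose_zero_right, Nat.cast_one, mul_one, integral_const,
      probReal_univ, smul_eq_mul, tsub_zero, ih, one_mul, pow_one, Nat.choose_succ_self_right,
      Nat.cast_ofNat, hmean a, Nat.add_one_sub_one, hmean_s, mul_zero, add_zero, Nat.choose_self,
      hvar a, tsub_self]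
    ring

theorem ProbabilityTheory.iIndepFun.integral_finsetSum_mul_pow_four (hindep : iIndepFun Y μ)
    (hY : ∀ i, MemLp (Y i) 4 μ) (hmean : ∀ i, ∫ ω, Y i ω ∂μ = 0)
    (hvar : ∀ i, ∫ ω, Y i ω ^ 2 ∂μ = 1) {ψ : ℝ} (hpsi : ∀ i, ∫ ω, Y i ω ^ 4 ∂μ = ψ)
    (w : ι → ℝ) (s : Finset ι) :
    ∫ ω, (∑ i ∈ s, w i * Y i ω) ^ 4 ∂μ =
      ψ * ∑ i ∈ s, w i ^ 4 + 3 * ((∑ i ∈ s, w i ^ 2) ^ 2 - ∑ i ∈ s, w i ^ 4) := by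
  classical
  have hY2 : ∀ i, MemLp (Y i) 2 μ := fun i => (hY i).mono_exponent (by norm_num)
  induction s using Finset.induction_on with
  | empty => simp
  | insert a s ha ih =>
    have hsplit := (hindep.indepFun_sum_mul_of_notMem (fun i => (hY i).1.aemeasurable) w ha
      ).integral_pow_mul_add_pow (r := 0) (n := 4) (hY a) (memLp_finsetSum_mul hY w s)
        (by norm_num) (w a)
    have hmean_s :=
      integral_finsetSum_mul_eq_zero (fun i => (hY2 i).integrable one_le_two) hmean w s
    simp only [pow_zero, one_mul] at hsplit
    simp only [sum_insert ha, hsplit, Nat.reduceAdd, zero_add, sum_range_succ, range_one,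
      sum_singleton, pow_zero, Nat.choose, Nat.cast_one, mul_one, integral_const, probReal_univ,
      smul_eq_mul, tsub_zero, ih, one_mul, pow_one, add_zero, Nat.cast_ofNat, hmean a,
      Nat.add_one_sub_one, zero_mul, mul_zero, hvar a, Nat.reduceSub,
      hindep.integral_finsetSum_mul_sq hY2 hmean hvar, hmean_s, hpsi a, tsub_self]
    ring

theorem ProbabilityTheory.iIndepFun.integral_finsetSum_mul_pow_three_mul
    (hindep : iIndepFun Y μ) (hY : ∀ i, MemLp (Y i) 4 μ) (hmean : ∀ i, ∫ ω, Y i ω ∂μ = 0)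
    (hvar : ∀ i, ∫ ω, Y i ω ^ 2 ∂μ = 1) (w : ι → ℝ) {s : Finset ι} {k : ι} (hk : k ∈ s) :
    Integrable (fun ω => (∑ i ∈ s, w i * Y i ω) ^ 3 * Y k ω) μ ∧
      ∫ ω, (∑ i ∈ s, w i * Y i ω) ^ 3 * Y k ω ∂μ =
        w k ^ 3 * ∫ ω, Y k ω ^ 4 ∂μ + 3 * w k * (∑ i ∈ s, w i ^ 2 - w k ^ 2) := by
  classical
  have hY2 : ∀ i, MemLp (Y i) 2 μ := fun i => (hY i).mono_exponent (by norm_num)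
  have hXT := hindep.indepFun_sum_mul_of_notMem (fun i => (hY i).1.aemeasurable) w
    (notMem_erase k s)
  have hT := memLp_finsetSum_mul hY w (s.erase k)
  have hsplit : (fun ω => (∑ i ∈ s, w i * Y i ω) ^ 3 * Y k ω) =
      fun ω => Y k ω ^ 1 * (w k * Y k ω + ∑ i ∈ s.erase k, w i * Y i ω) ^ 3 := by
    funext ω
    rw [add_sum_erase s (fun i => w i * Y i ω) hk]
    ring
  rw [hsplit]
  refine ⟨hXT.integrable_pow_mul_add_pow (hY k) hT (by norm_num) (w k), ?_⟩
  rw [hXT.integral_pow_mul_add_pow (hY k) hT (by norm_num)]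
  simp only [Nat.reduceAdd, sum_range_succ, range_one, sum_singleton, pow_zero,
    Nat.choose_zero_right, Nat.cast_one, mul_one, add_zero, pow_one, hmean, tsub_zero, zero_mul,
    mul_zero, Nat.choose_one_right, Nat.cast_ofNat, hvar, Nat.add_one_sub_one,
    hindep.integral_finsetSum_mul_sq hY2 hmean hvar, one_mul, zero_add,
    Nat.choose_succ_self_right, Nat.reduceSub,
    integral_finsetSum_mul_eq_zero (fun i => (hY2 i).integrable one_le_two) hmean,
    Nat.choose_self, tsub_self, integral_const, probReal_univ, smul_eq_mul]
  rw [sum_erase_eq_sub hk]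
  ring

end WeightedSums

theorem stmt_4_general {Ω : Type*} [MeasurableSpace Ω] (μ : Measure Ω) [IsProbabilityMeasure μ]
    {d : ℕ} (Y : Fin d → Ω → ℝ) (ψ : ℝ)
    (hindep : iIndepFun Y μ)
    (hL4 : ∀ i, MemLp (Y i) 4 μ)
    (hmean : ∀ i, ∫ ω, Y i ω ∂μ = 0)
    (hvar : ∀ i, ∫ ω, (Y i ω) ^ 2 ∂μ = 1)
    (hpsi : ∀ i, ∫ ω, (Y i ω) ^ 4 ∂μ = ψ)
    (v : EuclideanSpace ℝ (Fin d)) (hv : ‖v‖ = 1) (k : Fin d) :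
    ∫ ω, ((∑ i, v i * Y i ω) ^ 3 * Y k ω - v k * (∑ i, v i * Y i ω) ^ 4) ∂μ
      = (ψ - 3) * v k * ((v k) ^ 2 - ∑ i, (v i) ^ 4) := by
  have hv2 : ∑ i, v i ^ 2 = 1 := by rw [← EuclideanSpace.real_norm_sq_eq, hv, one_pow]
  obtain ⟨hmixed_int, hmixed⟩ :=
    hindep.integral_finsetSum_mul_pow_three_mul hL4 hmean hvar (fun i => v i) (mem_univ k)
  have hquartic_int : Integrable (fun ω => (∑ i, v i * Y i ω) ^ 4) μ :=
    (memLp_finsetSum_mul hL4 (fun i => v i) univ).integrable_pow_of_le (by norm_num)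
  rw [integral_sub hmixed_int (hquartic_int.const_mul _), integral_const_mul, hmixed, hpsi k,
    hindep.integral_finsetSum_mul_pow_four hL4 hmean hvar hpsi, hv2]
  ring

/-- For any unit vector `v ∈ ℝ^d` and coordinate `k`,
`E[(vᵀY)³·Y_k − v_k·(vᵀY)⁴] = (ψ − 3)·v_k·(v_k² − Σᵢ vᵢ⁴)`, where `Y` has independent
coordinates, symmetric about 0, mean 0, variance 1, identical fourth moments `ψ`. -/
theorem stmt_4 {Ω : Type*} [MeasurableSpace Ω] (μ : Measure Ω) [IsProbabilityMeasure μ]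
    {d : ℕ} (Y : Fin d → Ω → ℝ) (ψ : ℝ)
    (hmeas : ∀ i, Measurable (Y i))
    (hindep : iIndepFun Y μ)
    (hsymm : ∀ i, μ.map (Y i) = μ.map (fun ω => -Y i ω))
    (hL4 : ∀ i, MemLp (Y i) 4 μ)
    (hmean : ∀ i, ∫ ω, Y i ω ∂μ = 0)
    (hvar : ∀ i, ∫ ω, (Y i ω) ^ 2 ∂μ = 1)
    (hpsi : ∀ i, ∫ ω, (Y i ω) ^ 4 ∂μ = ψ)
    (v : EuclideanSpace ℝ (Fin d)) (hv : ‖v‖ = 1) (k : Fin d) :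
    ∫ ω, ((∑ i, v i * Y i ω) ^ 3 * Y k ω - v k * (∑ i, v i * Y i ω) ^ 4) ∂μ
      = (ψ - 3) * v k * ((v k) ^ 2 - ∑ i, (v i) ^ 4) :=
  stmt_4_general μ Y ψ hindep hL4 hmean hvar hpsi v hv k
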